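/- arXiv:2311.02604 — 6 statements merged into one kernel-verified Lean document; each statement's English description precedes it below -/
import Mathlib

section
/- Let 𝒜 be an associative supercommutative superalgebra over a field 𝕂 of characteristic zero and δ an even derivation of 𝒜. Then the bracket [u,v]_δ = u·δ(v) − (−1)^{|u||v|} v·δ(u) satisfies the graded Jacobi identity: for all homogeneous u, v, w ∈ 𝒜, [w,[u,v]_δ]_δ = [[w,u]_δ, v]_δ + (−1)^{|u||w|} [u,[w,v]_δ]_δ. -/
/-- The sign `(-1)^{ij}` in a field `K`, for parities `i j : ZMod 2`. -/
def sg (K : Type*) [Field K] (i j : ZMod 2) : K := (-1) ^ (i.val * j.val)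

/-- The bracket `[u,v]_δ = u·δ(v) − s·(v·δ(u))`, where `s` is the relevant sign
`(-1)^{|u||v|}`. -/
def tpb {K A : Type*} [Field K] [Ring A] [Algebra K A]
    (δ : A → A) (s : K) (u v : A) : A :=
  u * δ v - s • (v * δ u)

/-!
Write `X_u` for the operator `x ↦ u * δ x`. If `u * v = s • (v * u)`, the second-order terms
`u * v * δ (δ x)` cancel in `X_u ∘ X_v - s • X_v ∘ X_u`, which is therefore `X_{[u,v]_δ}`. Hence both
sides of the Jacobi identity expand into combinations of the six terms `a * δ (b * δ c)`, with
`(a, b, c)` a permutation of `(u, v, w)`, and comparing coefficients only uses that the sign is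
bimultiplicative with square `1`.
-/

section Sign

variable {K : Type*} [Field K]

theorem sg_comm (i j : ZMod 2) : sg K i j = sg K j i := by
  rw [sg, sg, mul_comm]

theorem sg_add_left (i j k : ZMod 2) : sg K (i + j) k = sg K i k * sg K j k := by
  rw [sg, sg, sg, ZMod.val_add, neg_one_pow_eq_pow_mod_two, Nat.mod_mul_mod,
    ← neg_one_pow_eq_pow_mod_two, add_mul, pow_add]

theorem sg_add_right (i j k : ZMod 2) : sg K i (j + k) = sg K i j * sg K i k := by
  rw [sg_comm, sg_add_left, sg_comm j, sg_comm k]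

theorem sg_mul_self (i j : ZMod 2) : sg K i j * sg K i j = 1 := by
  rw [sg, ← mul_pow, neg_one_mul, neg_neg, one_pow]

end Sign

section Bracket

variable {K A : Type*} [Field K] [Ring A] [Algebra K A] {δ : A →ₗ[K] A}

theorem tpb_mul_map (hδ : ∀ u v : A, δ (u * v) = δ u * v + u * δ v) {s : K} {u v : A}
    (h : u * v = s • (v * u)) (x : A) :
    tpb δ s u v * δ x = u * δ (v * δ x) - s • (v * δ (u * δ x)) := by
  simp only [tpb, hδ, mul_add, ← mul_assoc, h, smul_mul_assoc, sub_mul, smul_add]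
  abel

theorem tpb_tpb_right (hδ : ∀ u v : A, δ (u * v) = δ u * v + u * δ v) {s t : K} {u v : A}
    (h : u * v = t • (v * u)) (w : A) :
    tpb δ s w (tpb δ t u v) =
      w * δ (u * δ v) - t • (w * δ (v * δ u)) - s • (u * δ (v * δ w) - t • (v * δ (u * δ w))) := by
  rw [tpb, tpb_mul_map hδ h, tpb, map_sub, map_smul, mul_sub, mul_smul_comm]

theorem tpb_tpb_left (hδ : ∀ u v : A, δ (u * v) = δ u * v + u * δ v) {s t : K} {w u : A}
    (h : w * u = t • (u * w)) (v : A) :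
    tpb δ s (tpb δ t w u) v =
      w * δ (u * δ v) - t • (u * δ (w * δ v)) - s • (v * δ (w * δ u) - t • (v * δ (u * δ w))) := by
  rw [tpb, tpb_mul_map hδ h, tpb, map_sub, map_smul, mul_sub, mul_smul_comm]

end Bracket

theorem bracket_graded_jacobi_general
    {K A : Type*} [Field K] [Ring A] [Algebra K A]
    (𝒜 : ZMod 2 → Submodule K A)
    (hcomm : ∀ (i j : ZMod 2) (u v : A), u ∈ 𝒜 i → v ∈ 𝒜 j →
      u * v = sg K i j • (v * u))
    (δ : A →ₗ[K] A)
    (hδder : ∀ u v : A, δ (u * v) = δ u * v + u * δ v)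
    (i j k : ZMod 2) (u v w : A) (hu : u ∈ 𝒜 i) (hv : v ∈ 𝒜 j) (hw : w ∈ 𝒜 k) :
    tpb δ (sg K k (i + j)) w (tpb δ (sg K i j) u v) =
      tpb δ (sg K (k + i) j) (tpb δ (sg K k i) w u) v +
        sg K i k • tpb δ (sg K i (k + j)) u (tpb δ (sg K k j) w v) := by
  rw [tpb_tpb_right hδder (hcomm i j u v hu hv), tpb_tpb_left hδder (hcomm k i w u hw hu),
    tpb_tpb_right hδder (hcomm k j w v hw hv), sg_add_right k, sg_add_left k, sg_add_right i,
    sg_comm i k]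
  linear_combination (norm := module) (sg_mul_self (K := K) k i) •
    (sg K i j • (w * δ (v * δ u)) - (sg K i j * sg K k j) • (v * δ (w * δ u)))

/-- for an associative supercommutative superalgebra `A` over a field `K`
of characteristic zero, with grading `𝒜 : ZMod 2 → Submodule K A`, and an even
derivation `δ`, the bracket `[u,v]_δ = u·δ(v) − (−1)^{|u||v|} v·δ(u)` satisfies the
graded Jacobi identity
`[w,[u,v]_δ]_δ = [[w,u]_δ,v]_δ + (−1)^{|u||w|}[u,[w,v]_δ]_δ`
for homogeneous `u, v, w` of parities `i, j, k` respectively. -/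
theorem bracket_graded_jacobi
    {K A : Type*} [Field K] [CharZero K] [Ring A] [Algebra K A]
    (𝒜 : ZMod 2 → Submodule K A) [GradedAlgebra 𝒜]
    (hcomm : ∀ (i j : ZMod 2) (u v : A), u ∈ 𝒜 i → v ∈ 𝒜 j →
      u * v = sg K i j • (v * u))
    (δ : A →ₗ[K] A)
    (hδeven : ∀ (i : ZMod 2) (u : A), u ∈ 𝒜 i → δ u ∈ 𝒜 i)
    (hδder : ∀ u v : A, δ (u * v) = δ u * v + u * δ v)
    (i j k : ZMod 2) (u v w : A) (hu : u ∈ 𝒜 i) (hv : v ∈ 𝒜 j) (hw : w ∈ 𝒜 k) :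
    tpb δ (sg K k (i + j)) w (tpb δ (sg K i j) u v) =
      tpb δ (sg K (k + i) j) (tpb δ (sg K k i) w u) v +
        sg K i k • tpb δ (sg K i (k + j)) u (tpb δ (sg K k j) w v) :=
  bracket_graded_jacobi_general 𝒜 hcomm δ hδder i j k u v w hu hv hw
end

section
/- Let 𝔊 be the two-dimensional ℤ₂-graded complex vector space with basis {e₀, e₁}, e₀ even and e₁ odd, with bilinear multiplication e₀·e₀ = a e₀, e₀·e₁ = e₁·e₀ = b e₁, e₁·e₁ = 0 (a, b ∈ ℂ), and with the bracket of the Lie superalgebra of type II: [e₀,e₀] = 0, [e₀,e₁] = 0, [e₁,e₁] = e₀. If the transposed Poisson compatibility condition 2 z·[x,y] = [z·x, y] + (−1)^{|x||z|}[x, z·y] holds for all homogeneous x, y, z ∈ 𝔊, then a = 0 and b = 0. -/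
/-- The (1,1)-dimensional super vector space `ℂ × ℂ` with homogeneous basis
`e₀ = (1,0)` (even) and `e₁ = (0,1)` (odd), with the unique bilinear commutative
multiplication determined by `e₀·e₀ = a e₀`, `e₀·e₁ = e₁·e₀ = b e₁`, `e₁·e₁ = 0`. -/
def superMul (a b : ℂ) (x y : ℂ × ℂ) : ℂ × ℂ :=
  (a * x.1 * y.1, b * (x.1 * y.2 + x.2 * y.1))

/-- The bracket of the type II Lie superalgebra on `ℂ × ℂ`: the unique bilinear map
with `[e₀,e₀] = 0`, `[e₀,e₁] = [e₁,e₀] = 0`, `[e₁,e₁] = e₀`. -/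
def brII (x y : ℂ × ℂ) : ℂ × ℂ := (x.2 * y.2, 0)

/-- `x ∈ ℂ × ℂ` is homogeneous of parity `p`: even elements lie on the `e₀`-axis,
odd elements on the `e₁`-axis. -/
def Homog (x : ℂ × ℂ) (p : ZMod 2) : Prop :=
  (p = 0 ∧ x.2 = 0) ∨ (p = 1 ∧ x.1 = 0)

/-- if the multiplication `e₀·e₀ = a e₀`, `e₀·e₁ = e₁·e₀ = b e₁`,
`e₁·e₁ = 0` and the type II bracket `[e₁,e₁] = e₀` (all other basis brackets zero)
satisfy the transposed Poisson compatibility condition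
`2 z·[x,y] = [z·x,y] + (−1)^{|x||z|}[x,z·y]` for all homogeneous `x, y, z`,
then `a = 0` and `b = 0`. -/
theorem typeII_compat_implies (a b : ℂ)
    (hcompat : ∀ (px py pz : ZMod 2) (x y z : ℂ × ℂ),
      Homog x px → Homog y py → Homog z pz →
      (2 : ℂ) • superMul a b z (brII x y) =
        brII (superMul a b z x) y +
          ((-1 : ℂ) ^ (px.val * pz.val)) • brII x (superMul a b z y)) :
    a = 0 ∧ b = 0 := by
  have h1 := hcompat 1 1 1 (0,1) (0,1) (0,1) (Or.inr ⟨rfl, rfl⟩) (Or.inr ⟨rfl, rfl⟩)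
    (Or.inr ⟨rfl, rfl⟩)
  have h2 := hcompat 1 1 0 (0,1) (0,1) (1,0) (Or.inr ⟨rfl, rfl⟩) (Or.inr ⟨rfl, rfl⟩)
    (Or.inl ⟨rfl, rfl⟩)
  simp [superMul, brII, Prod.ext_iff, Prod.smul_def, smul_eq_mul] at h1 h2
  exact ⟨by linear_combination h2 / 2 + h1, h1⟩
end

section
/- Let 𝔄 be an associative supercommutative superalgebra over a field of characteristic zero, let d and ι be odd anti-derivations of 𝔄 with d∘d = 0, and set D = d∘ι + ι∘d. If ω = dζ is exact (ζ homogeneous) and θ is homogeneous with dθ = 0, then [ω,θ]_D is exact; explicitly, [dζ, θ]_D = d( ζ·D(θ) − (−1)^{|ζ||θ|} θ·D(ζ) ). -/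
/-!
Write `D = dι + ιd`. Because `d² = 0`, both `d (D u)` and `D (d u)` equal `d (ι (d u))`; in
particular `d (D θ) = 0` for closed `θ`. The Leibniz rule then gives `d (ζ·Dθ) = dζ·Dθ` and
`d (θ·Dζ) = (-1)^{|θ|} θ·D(dζ)`, and `(-1)^{|θ|} (-1)^{|ζ||θ|} = (-1)^{|dζ||θ|}`.
-/

lemma sg_add_one_left (K : Type*) [Field K] (i j : ZMod 2) :
    sg K (i + 1) j = (-1 : K) ^ j.val * sg K i j := by
  have hval : ∀ a b : ZMod 2, (a + 1).val * b.val % 2 = (b.val + a.val * b.val) % 2 := by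
    decide
  unfold sg
  rw [← pow_add, neg_one_pow_eq_pow_mod_two, hval, ← neg_one_pow_eq_pow_mod_two]

section OddDerivations

variable {K A : Type*} [CommRing K] [Ring A] [Algebra K A]

def IsOddMap (𝒜 : ZMod 2 → Submodule K A) (f : A →ₗ[K] A) : Prop :=
  ∀ (i : ZMod 2) (u : A), u ∈ 𝒜 i → f u ∈ 𝒜 (i + 1)

def IsSuperLeibniz (𝒜 : ZMod 2 → Submodule K A) (d : A →ₗ[K] A) : Prop :=
  ∀ (i j : ZMod 2) (u v : A), u ∈ 𝒜 i → v ∈ 𝒜 j →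
    d (u * v) = d u * v + ((-1 : K) ^ i.val) • (u * d v)

variable {𝒜 : ZMod 2 → Submodule K A} {d ι : A →ₗ[K] A}

lemma IsOddMap.map_map_mem (hd : IsOddMap 𝒜 d) (hι : IsOddMap 𝒜 ι)
    {i : ZMod 2} {u : A} (hu : u ∈ 𝒜 i) : d (ι u) ∈ 𝒜 i := by
  have h := hd _ _ (hι i u hu)
  rwa [add_assoc, one_add_one_eq_two, show (2 : ZMod 2) = 0 from rfl, add_zero] at h

lemma IsOddMap.anticommutator_apply_mem (hd : IsOddMap 𝒜 d) (hι : IsOddMap 𝒜 ι)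
    {i : ZMod 2} {u : A} (hu : u ∈ 𝒜 i) : d (ι u) + ι (d u) ∈ 𝒜 i :=
  add_mem (hd.map_map_mem hι hu) (hι.map_map_mem hd hu)

lemma map_anticommutator_apply (hdd : ∀ u : A, d (d u) = 0) (u : A) :
    d (d (ι u) + ι (d u)) = d (ι (d u)) := by
  rw [map_add, hdd, zero_add]

lemma anticommutator_apply_map (hdd : ∀ u : A, d (d u) = 0) (u : A) :
    d (ι (d u)) + ι (d (d u)) = d (ι (d u)) := by
  rw [hdd, map_zero, add_zero]

lemma IsSuperLeibniz.map_mul_of_map_right_eq_zero (hd : IsSuperLeibniz 𝒜 d) {i j : ZMod 2}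
    {u v : A} (hu : u ∈ 𝒜 i) (hv : v ∈ 𝒜 j) (hdv : d v = 0) : d (u * v) = d u * v := by
  rw [hd i j u v hu hv, hdv, mul_zero, smul_zero, add_zero]

lemma IsSuperLeibniz.map_mul_of_map_left_eq_zero (hd : IsSuperLeibniz 𝒜 d) {i j : ZMod 2}
    {u v : A} (hu : u ∈ 𝒜 i) (hv : v ∈ 𝒜 j) (hdu : d u = 0) :
    d (u * v) = ((-1 : K) ^ i.val) • (u * d v) := by
  rw [hd i j u v hu hv, hdu, zero_mul, zero_add]

end OddDerivations

theorem bracket_of_exact_is_exact_general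
    {K A : Type*} [Field K] [Ring A] [Algebra K A]
    (𝒜 : ZMod 2 → Submodule K A)
    (d iota : A →ₗ[K] A)
    (hd_mem : ∀ (i : ZMod 2) (u : A), u ∈ 𝒜 i → d u ∈ 𝒜 (i + 1))
    (hiota_mem : ∀ (i : ZMod 2) (u : A), u ∈ 𝒜 i → iota u ∈ 𝒜 (i + 1))
    (hd_leib : ∀ (i j : ZMod 2) (u v : A), u ∈ 𝒜 i → v ∈ 𝒜 j →
      d (u * v) = d u * v + ((-1 : K) ^ i.val) • (u * d v))
    (hdd : ∀ u : A, d (d u) = 0)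
    (k j : ZMod 2) (ζ θ : A) (hζ : ζ ∈ 𝒜 k) (hθ : θ ∈ 𝒜 j)
    (hθclosed : d θ = 0) :
    d ζ * (d (iota θ) + iota (d θ))
        - sg K (k + 1) j • (θ * (d (iota (d ζ)) + iota (d (d ζ))))
      = d (ζ * (d (iota θ) + iota (d θ))
          - sg K k j • (θ * (d (iota ζ) + iota (d ζ)))) := by
  have hd : IsOddMap 𝒜 d := hd_mem
  have hι : IsOddMap 𝒜 iota := hiota_mem
  have hleib : IsSuperLeibniz 𝒜 d := hd_leib
  have hDθ_closed : d (d (iota θ) + iota (d θ)) = 0 := by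
    rw [map_anticommutator_apply hdd, hθclosed, map_zero, map_zero]
  have hζDθ := hleib.map_mul_of_map_right_eq_zero hζ (hd.anticommutator_apply_mem hι hθ)
    hDθ_closed
  have hθDζ := hleib.map_mul_of_map_left_eq_zero hθ (hd.anticommutator_apply_mem hι hζ)
    hθclosed
  rw [map_sub, map_smul, hζDθ, hθDζ, map_anticommutator_apply hdd,
    anticommutator_apply_map hdd, smul_smul, sg_add_one_left, mul_comm]

/-- let `A` be an associative supercommutative superalgebra over a field
`K` of characteristic zero, `d` and `iota` odd anti-derivations of `A` with `d∘d = 0`,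
and `D = d∘iota + iota∘d`. If `ω = dζ` is exact (`ζ` homogeneous of parity `k`, so
`|ω| = k+1`) and `θ` is homogeneous of parity `j` with `dθ = 0`, then `[ω,θ]_D` is
exact; explicitly, `[dζ,θ]_D = d(ζ·D(θ) − (−1)^{|ζ||θ|} θ·D(ζ))`. -/
theorem bracket_of_exact_is_exact
    {K A : Type*} [Field K] [CharZero K] [Ring A] [Algebra K A]
    (𝒜 : ZMod 2 → Submodule K A) [GradedAlgebra 𝒜]
    (hcomm : ∀ (i j : ZMod 2) (u v : A), u ∈ 𝒜 i → v ∈ 𝒜 j →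
      u * v = sg K i j • (v * u))
    (d iota : A →ₗ[K] A)
    (hd_mem : ∀ (i : ZMod 2) (u : A), u ∈ 𝒜 i → d u ∈ 𝒜 (i + 1))
    (hiota_mem : ∀ (i : ZMod 2) (u : A), u ∈ 𝒜 i → iota u ∈ 𝒜 (i + 1))
    (hd_leib : ∀ (i j : ZMod 2) (u v : A), u ∈ 𝒜 i → v ∈ 𝒜 j →
      d (u * v) = d u * v + ((-1 : K) ^ i.val) • (u * d v))
    (hiota_leib : ∀ (i j : ZMod 2) (u v : A), u ∈ 𝒜 i → v ∈ 𝒜 j →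
      iota (u * v) = iota u * v + ((-1 : K) ^ i.val) • (u * iota v))
    (hdd : ∀ u : A, d (d u) = 0)
    (k j : ZMod 2) (ζ θ : A) (hζ : ζ ∈ 𝒜 k) (hθ : θ ∈ 𝒜 j)
    (hθclosed : d θ = 0) :
    d ζ * (d (iota θ) + iota (d θ))
        - sg K (k + 1) j • (θ * (d (iota (d ζ)) + iota (d (d ζ))))
      = d (ζ * (d (iota θ) + iota (d θ))
          - sg K k j • (θ * (d (iota ζ) + iota (d ζ)))) :=
  bracket_of_exact_is_exact_general 𝒜 d iota hd_mem hiota_mem hd_leib hdd k j ζ θ hζ hθ hθclosed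
end

section
/- Let 𝔄 be an associative supercommutative superalgebra over a field of characteristic zero, let d and ι be odd anti-derivations of 𝔄 with d∘d = 0, and set D = d∘ι + ι∘d. Then the bracket [ω,θ]_D = ω·D(θ) − (−1)^{|ω||θ|} θ·D(ω) descends to cohomology: if ω, ω', θ, θ' are homogeneous closed elements with |ω| = |ω'|, |θ| = |θ'|, and ω − ω' and θ − θ' are exact, then [ω,θ]_D − [ω',θ']_D is exact. -/
theorem d_mul_closed {K A : Type*} [Field K] [Ring A] [Algebra K A]
    (𝒜 : ZMod 2 → Submodule K A) [GradedAlgebra 𝒜]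
    (d : A →ₗ[K] A)
    (hd_leib : ∀ (i j : ZMod 2) (u v : A), u ∈ 𝒜 i → v ∈ 𝒜 j →
      d (u * v) = d u * v + ((-1 : K) ^ i.val) • (u * d v))
    (m : ZMod 2) (v : A) (hv : v ∈ 𝒜 m) (hvc : d v = 0)
    (α : A) : d (α * v) = d α * v := by
  classical
  conv_lhs => rw [← DirectSum.sum_support_decompose 𝒜 α]
  conv_rhs => rw [← DirectSum.sum_support_decompose 𝒜 α]
  rw [Finset.sum_mul, map_sum, map_sum, Finset.sum_mul]
  refine Finset.sum_congr rfl fun k _ => ?_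
  rw [hd_leib k m _ v (DirectSum.decompose 𝒜 α k).2 hv, hvc, mul_zero, smul_zero, add_zero]

/-- let `A` be an associative supercommutative superalgebra over a field
`K` of characteristic zero, `d` and `iota` odd anti-derivations of `A` with `d∘d = 0`,
and `D = d∘iota + iota∘d`. The bracket `[ω,θ]_D = ω·D(θ) − (−1)^{|ω||θ|} θ·D(ω)`
descends to cohomology: if `ω, ω', θ, θ'` are homogeneous closed elements with
`|ω| = |ω'| = i`, `|θ| = |θ'| = j`, and `ω − ω'` and `θ − θ'` are exact, then
`[ω,θ]_D − [ω',θ']_D` is exact. -/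
theorem bracket_descends_to_cohomology
    {K A : Type*} [Field K] [CharZero K] [Ring A] [Algebra K A]
    (𝒜 : ZMod 2 → Submodule K A) [GradedAlgebra 𝒜]
    (hcomm : ∀ (i j : ZMod 2) (u v : A), u ∈ 𝒜 i → v ∈ 𝒜 j →
      u * v = sg K i j • (v * u))
    (d iota : A →ₗ[K] A)
    (hd_mem : ∀ (i : ZMod 2) (u : A), u ∈ 𝒜 i → d u ∈ 𝒜 (i + 1))
    (hiota_mem : ∀ (i : ZMod 2) (u : A), u ∈ 𝒜 i → iota u ∈ 𝒜 (i + 1))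
    (hd_leib : ∀ (i j : ZMod 2) (u v : A), u ∈ 𝒜 i → v ∈ 𝒜 j →
      d (u * v) = d u * v + ((-1 : K) ^ i.val) • (u * d v))
    (hiota_leib : ∀ (i j : ZMod 2) (u v : A), u ∈ 𝒜 i → v ∈ 𝒜 j →
      iota (u * v) = iota u * v + ((-1 : K) ^ i.val) • (u * iota v))
    (hdd : ∀ u : A, d (d u) = 0)
    (i j : ZMod 2) (ω ω' θ θ' : A)
    (hω : ω ∈ 𝒜 i) (hω' : ω' ∈ 𝒜 i) (hθ : θ ∈ 𝒜 j) (hθ' : θ' ∈ 𝒜 j)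
    (hωc : d ω = 0) (hω'c : d ω' = 0) (hθc : d θ = 0) (hθ'c : d θ' = 0)
    (hωexact : ∃ ζ, d ζ = ω - ω') (hθexact : ∃ ζ, d ζ = θ - θ') :
    ∃ ζ, d ζ =
      (ω * (d (iota θ) + iota (d θ)) - sg K i j • (θ * (d (iota ω) + iota (d ω))))
      - (ω' * (d (iota θ') + iota (d θ'))
          - sg K i j • (θ' * (d (iota ω') + iota (d ω')))) := by
  obtain ⟨α, hα⟩ := hωexact
  obtain ⟨β, hβ⟩ := hθexact
  have hsq : ((-1 : K) ^ i.val) * ((-1 : K) ^ i.val) = 1 := by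
    rw [← mul_pow]; norm_num
  have hsqj : ((-1 : K) ^ j.val) * ((-1 : K) ^ j.val) = 1 := by
    rw [← mul_pow]; norm_num
  have h1 : d (α * d (iota θ)) = (ω - ω') * d (iota θ) := by
    rw [d_mul_closed 𝒜 d hd_leib (j + 1 + 1) _ (hd_mem _ _ (hiota_mem j θ hθ))
      (hdd _) α, hα]
  have h2 : d (ω' * iota (d β)) =
      ((-1 : K) ^ i.val) • (ω' * (d (iota θ) - d (iota θ'))) := by
    have hmem : iota (d β) ∈ 𝒜 (j + 1) :=
      hiota_mem j _ (hβ ▸ sub_mem hθ hθ')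
    rw [hd_leib i (j + 1) _ _ hω' hmem, hω'c, zero_mul, zero_add,
      hβ, map_sub, map_sub]
  have h3 : d (β * d (iota ω)) = (θ - θ') * d (iota ω) := by
    rw [d_mul_closed 𝒜 d hd_leib (i + 1 + 1) _ (hd_mem _ _ (hiota_mem i ω hω))
      (hdd _) β, hβ]
  have h4 : d (θ' * iota (d α)) =
      ((-1 : K) ^ j.val) • (θ' * (d (iota ω) - d (iota ω'))) := by
    have hmem : iota (d α) ∈ 𝒜 (i + 1) :=
      hiota_mem i _ (hα ▸ sub_mem hω hω')
    rw [hd_leib j (i + 1) _ _ hθ' hmem, hθ'c, zero_mul, zero_add,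
      hα, map_sub, map_sub]
  refine ⟨α * d (iota θ) + ((-1 : K) ^ i.val) • (ω' * iota (d β))
    - sg K i j • (β * d (iota ω) + ((-1 : K) ^ j.val) • (θ' * iota (d α))), ?_⟩
  rw [map_sub, map_add, map_smul, map_smul, map_add, map_smul, h1, h2, h3, h4,
    smul_smul, hsq, one_smul, smul_smul, hsqj, one_smul,
    hωc, hω'c, hθc, hθ'c, map_zero]
  simp only [add_zero, sub_mul, mul_sub]
  module
end

section
/- Let (𝔊, ·, [·,·]) be a transposed Poisson superalgebra. Then for all homogeneous x, y, z ∈ 𝔊: (−1)^{|x||z|} x·[y,z] + (−1)^{|x||y|} y·[z,x] + (−1)^{|y||z|} z·[x,y] = 0. -/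
/-- in a transposed Poisson superalgebra `(V, m, b)` over a field `K` of
characteristic zero, for all homogeneous `x, y, z` of parities `i, j, k`:
`(−1)^{|x||z|} x·[y,z] + (−1)^{|x||y|} y·[z,x] + (−1)^{|y||z|} z·[x,y] = 0`. -/
theorem tpsa_identity_one
    {K V : Type*} [Field K] [CharZero K] [AddCommGroup V] [Module K V]
    (𝒢 : ZMod 2 → Submodule K V) [DirectSum.Decomposition 𝒢]
    (m : V →ₗ[K] V →ₗ[K] V) (b : V →ₗ[K] V →ₗ[K] V)
    (hm_mem : ∀ (i j : ZMod 2) (x y : V), x ∈ 𝒢 i → y ∈ 𝒢 j → m x y ∈ 𝒢 (i + j))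
    (hassoc : ∀ x y z : V, m (m x y) z = m x (m y z))
    (hcomm : ∀ (i j : ZMod 2) (x y : V), x ∈ 𝒢 i → y ∈ 𝒢 j → m x y = sg K i j • m y x)
    (hb_mem : ∀ (i j : ZMod 2) (x y : V), x ∈ 𝒢 i → y ∈ 𝒢 j → b x y ∈ 𝒢 (i + j))
    (hskew : ∀ (i j : ZMod 2) (x y : V), x ∈ 𝒢 i → y ∈ 𝒢 j →
      b x y = -(sg K i j • b y x))
    (hjacobi : ∀ (i j k : ZMod 2) (x y z : V), x ∈ 𝒢 i → y ∈ 𝒢 j → z ∈ 𝒢 k →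
      b x (b y z) = b (b x y) z + sg K i j • b y (b x z))
    (hcompat : ∀ (i j k : ZMod 2) (x y z : V), x ∈ 𝒢 i → y ∈ 𝒢 j → z ∈ 𝒢 k →
      (2 : K) • m z (b x y) = b (m z x) y + sg K i k • b x (m z y))
    (i j k : ZMod 2) (x y z : V) (hx : x ∈ 𝒢 i) (hy : y ∈ 𝒢 j) (hz : z ∈ 𝒢 k) :
    sg K i k • m x (b y z) + sg K i j • m y (b z x) + sg K j k • m z (b x y) = 0 := by

  have c1 := hcompat j k i y z x hy hz hx
  have c2 := hcompat k i j z x y hz hx hy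
  have c3 := hcompat i j k x y z hx hy hz
  have e1 : b (m x y) z = -(sg K (i+j) k • b z (m x y)) :=
    hskew (i+j) k _ _ (hm_mem i j x y hx hy) hz
  have e3 : b (m y z) x = -(sg K (j+k) i • b x (m y z)) :=
    hskew (j+k) i _ _ (hm_mem j k y z hy hz) hx
  have e5 : b (m x z) y = -(sg K (i+k) j • b y (m x z)) :=
    hskew (i+k) j _ _ (hm_mem i k x z hx hz) hy
  have m1 : m y x = sg K j i • m x y := hcomm j i y x hy hx
  have m2 : m z x = sg K k i • m x z := hcomm k i z x hz hx
  have m3 : m z y = sg K k j • m y z := hcomm k j z y hz hy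
  have key : (2:K) • (sg K i k • m x (b y z) + sg K i j • m y (b z x)
      + sg K j k • m z (b x y)) = 0 := by
    rw [smul_add, smul_add, smul_comm (2:K) (sg K i k), smul_comm (2:K) (sg K i j),
      smul_comm (2:K) (sg K j k), c1, c2, c3, e1, m1, m2, m3]
    simp only [map_smul, LinearMap.smul_apply, LinearMap.map_smul]
    rw [e3, e5]
    match_scalars <;>
      (simp only [sg, ZMod.val_add] <;> fin_cases i <;> fin_cases j <;> fin_cases k <;>
        norm_num [ZMod.val] <;> ring_nf <;> norm_num)
  rcases smul_eq_zero.mp key with h | h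
  · exact absurd h two_ne_zero
  · exact h
end

section
/- Let (𝔊, ·, [·,·]) be a transposed Poisson superalgebra. Then for all homogeneous u, v, x, y ∈ 𝔊: 2 u·v·[x,y] = (−1)^{|x||v|} [u·x, v·y] + (−1)^{|u|(|x|+|v|)} [v·x, u·y]. -/
lemma sg_mul_sg (K : Type*) [Field K] (i p q : ZMod 2) :
    sg K i q * sg K i p = sg K i (p + q) := by
  rw [sg, sg, sg, ← pow_add, neg_one_pow_eq_pow_mod_two, neg_one_pow_eq_pow_mod_two (n := _ * _)]
  congr 1
  revert i p q
  decide

lemma sg_add_left_eq_neg_one_pow (K : Type*) [Field K] (p q i : ZMod 2) :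
    sg K (q + i) p = (-1 : K) ^ (p.val * (i.val + q.val)) := by
  rw [sg, neg_one_pow_eq_pow_mod_two, neg_one_pow_eq_pow_mod_two (n := _ * _)]
  congr 1
  revert i p q
  decide

lemma two_smul_mul_mul_bracket {K V : Type*} [Field K] [AddCommGroup V] [Module K V]
    (𝒢 : ZMod 2 → Submodule K V) (m b : V →ₗ[K] V →ₗ[K] V)
    (hassoc : ∀ x y z : V, m (m x y) z = m x (m y z))
    (hcompat : ∀ (i j k : ZMod 2) (x y z : V), x ∈ 𝒢 i → y ∈ 𝒢 j → z ∈ 𝒢 k →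
      (2 : K) • m z (b x y) = b (m z x) y + sg K i k • b x (m z y))
    {q i j : ZMod 2} (u : V) {v x y : V} (hv : v ∈ 𝒢 q) (hx : x ∈ 𝒢 i) (hy : y ∈ 𝒢 j) :
    (2 : K) • m (m u v) (b x y) = m u (b (m v x) y) + sg K i q • m u (b x (m v y)) := by
  simpa only [map_smul, map_add, ← hassoc] using congrArg (m u) (hcompat i j q x y v hx hy hv)

theorem tpsa_identity_five_general
    {K V : Type*} [Field K] [AddCommGroup V] [Module K V]
    (𝒢 : ZMod 2 → Submodule K V)
    (m : V →ₗ[K] V →ₗ[K] V) (b : V →ₗ[K] V →ₗ[K] V)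
    (hm_mem : ∀ (i j : ZMod 2) (x y : V), x ∈ 𝒢 i → y ∈ 𝒢 j → m x y ∈ 𝒢 (i + j))
    (hassoc : ∀ x y z : V, m (m x y) z = m x (m y z))
    (hcompat : ∀ (i j k : ZMod 2) (x y z : V), x ∈ 𝒢 i → y ∈ 𝒢 j → z ∈ 𝒢 k →
      (2 : K) • m z (b x y) = b (m z x) y + sg K i k • b x (m z y))
    (p q i j : ZMod 2) (u v x y : V)
    (hu : u ∈ 𝒢 p) (hv : v ∈ 𝒢 q) (hx : x ∈ 𝒢 i) (hy : y ∈ 𝒢 j) :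
    (2 : K) • m (m u v) (b x y) =
      sg K i q • b (m u x) (m v y)
        + ((-1 : K) ^ (p.val * (i.val + q.val))) • b (m v x) (m u y) := by
  have h_left := two_smul_mul_mul_bracket 𝒢 m b hassoc hcompat u hv hx hy
  have h_vx := hcompat (q + i) j p (m v x) y u (hm_mem q i v x hv hx) hy hu
  have h_vy := hcompat i (q + j) p x (m v y) u hx (hm_mem q j v y hv hy) hu
  have h_uv := hcompat i j (p + q) x y (m u v) hx hy (hm_mem p q u v hu hv)
  rw [← hassoc, sg_add_left_eq_neg_one_pow] at h_vx
  rw [← hassoc] at h_vy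
  rw [← sg_mul_sg K i p q] at h_uv
  linear_combination (norm := module) (2 : K) • h_left + h_vx + sg K i q • h_vy - h_uv

/-- in a transposed Poisson superalgebra `(V, m, b)` over a field `K` of
characteristic zero, for all homogeneous `u, v, x, y` of parities `p, q, i, j`:
`2 u·v·[x,y] = (−1)^{|x||v|}[u·x, v·y] + (−1)^{|u|(|x|+|v|)}[v·x, u·y]`. -/
theorem tpsa_identity_five
    {K V : Type*} [Field K] [CharZero K] [AddCommGroup V] [Module K V]
    (𝒢 : ZMod 2 → Submodule K V) [DirectSum.Decomposition 𝒢]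
    (m : V →ₗ[K] V →ₗ[K] V) (b : V →ₗ[K] V →ₗ[K] V)
    (hm_mem : ∀ (i j : ZMod 2) (x y : V), x ∈ 𝒢 i → y ∈ 𝒢 j → m x y ∈ 𝒢 (i + j))
    (hassoc : ∀ x y z : V, m (m x y) z = m x (m y z))
    (hcomm : ∀ (i j : ZMod 2) (x y : V), x ∈ 𝒢 i → y ∈ 𝒢 j → m x y = sg K i j • m y x)
    (hb_mem : ∀ (i j : ZMod 2) (x y : V), x ∈ 𝒢 i → y ∈ 𝒢 j → b x y ∈ 𝒢 (i + j))
    (hskew : ∀ (i j : ZMod 2) (x y : V), x ∈ 𝒢 i → y ∈ 𝒢 j →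
      b x y = -(sg K i j • b y x))
    (hjacobi : ∀ (i j k : ZMod 2) (x y z : V), x ∈ 𝒢 i → y ∈ 𝒢 j → z ∈ 𝒢 k →
      b x (b y z) = b (b x y) z + sg K i j • b y (b x z))
    (hcompat : ∀ (i j k : ZMod 2) (x y z : V), x ∈ 𝒢 i → y ∈ 𝒢 j → z ∈ 𝒢 k →
      (2 : K) • m z (b x y) = b (m z x) y + sg K i k • b x (m z y))
    (p q i j : ZMod 2) (u v x y : V)
    (hu : u ∈ 𝒢 p) (hv : v ∈ 𝒢 q) (hx : x ∈ 𝒢 i) (hy : y ∈ 𝒢 j) :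
    (2 : K) • m (m u v) (b x y) =
      sg K i q • b (m u x) (m v y)
        + ((-1 : K) ^ (p.val * (i.val + q.val))) • b (m v x) (m u y) :=
  tpsa_identity_five_general 𝒢 m b hm_mem hassoc hcompat p q i j u v x y hu hv hx hy
end
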